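/- arXiv:2505.04866 — 2 statements merged into one kernel-verified Lean document; each statement's English description precedes it below -/
import Mathlib

section
/- With f_R as above, there exists C_R > 0 such that for any differentiable v, w : D -> R^3, the pointwise estimate |∇f_R(v) - ∇f_R(w)| ≤ C_R (1 + |v|^3) |∇v - ∇w| + C_R (1 + |v|^3) |∇v| |v - w| holds. Consequently, for p, q ∈ [1,∞] with 1/p + 1/q = 1/2, ‖∇f_R(v) - ∇f_R(w)‖_{L^2} ≤ C_R (1 + ‖v‖_{L^∞}^3) ‖∇v - ∇w‖_{L^2} + C_R (1 + ‖v‖_{L^∞}^3) ‖∇v‖_{L^p} ‖v - w‖_{L^q}. -/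
open MeasureTheory
open scoped RealInnerProductSpace ENNReal

noncomputable section

abbrev E3 := EuclideanSpace ℝ (Fin 3)

/-- The nonlinearity `f(v) = v - |v|² v`. -/
def fcube (a : E3) : E3 := a - ‖a‖ ^ 2 • a

set_option maxHeartbeats 1000000 in
/-- With `f_R(v) = φ_R(v)(v - |v|² v)`, there exists `C_R > 0` such that for any
differentiable `v, w : D → ℝ³` the pointwise estimate
`|∇f_R(v) - ∇f_R(w)| ≤ C_R (1+|v|³)|∇v - ∇w| + C_R (1+|v|³)|∇v| |v - w|` holds, and
consequently, for `p, q ∈ [1,∞]` with `1/p + 1/q = 1/2`,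
`‖∇f_R(v) - ∇f_R(w)‖_{L²} ≤ C_R (1+‖v‖_∞³)‖∇v-∇w‖_{L²} + C_R (1+‖v‖_∞³)‖∇v‖_{L^p}‖v-w‖_{L^q}`. -/
theorem stmt5 {d : ℕ} (μ : Measure (EuclideanSpace ℝ (Fin d)))
    (R : ℝ) (hR : 0 < R) (φ : E3 → ℝ) (hφ : ContDiff ℝ 2 φ)
    (hφ1 : ∀ a : E3, ‖a‖ ≤ R → φ a = 1)
    (hφ0 : ∀ a : E3, 2 * R ≤ ‖a‖ → φ a = 0) :
    ∃ C > (0 : ℝ), ∀ v w : EuclideanSpace ℝ (Fin d) → E3,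
      Differentiable ℝ v → Differentiable ℝ w →
      (∀ x, ‖fderiv ℝ (fun y => φ (v y) • fcube (v y)) x
              - fderiv ℝ (fun y => φ (w y) • fcube (w y)) x‖
          ≤ C * (1 + ‖v x‖ ^ 3) * ‖fderiv ℝ v x - fderiv ℝ w x‖
            + C * (1 + ‖v x‖ ^ 3) * ‖fderiv ℝ v x‖ * ‖v x - w x‖) ∧
      ∀ p q : ℝ≥0∞, 1 / p + 1 / q = 1 / 2 →
        eLpNorm (fun x => fderiv ℝ (fun y => φ (v y) • fcube (v y)) x
            - fderiv ℝ (fun y => φ (w y) • fcube (w y)) x) 2 μ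
          ≤ ENNReal.ofReal (C * (1 + ((eLpNorm v ⊤ μ).toReal) ^ 3)) *
              eLpNorm (fun x => fderiv ℝ v x - fderiv ℝ w x) 2 μ
            + ENNReal.ofReal (C * (1 + ((eLpNorm v ⊤ μ).toReal) ^ 3)) *
                eLpNorm (fun x => fderiv ℝ v x) p μ * eLpNorm (fun x => v x - w x) q μ := by
  -- the cutoff nonlinearity
  set g : E3 → E3 := fun a => φ a • fcube a with hg_def
  have hfc : ContDiff ℝ 2 fcube := by
    have h1 : ContDiff ℝ 2 fun a : E3 => ‖a‖ ^ 2 • a :=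
      (contDiff_norm_sq ℝ).smul contDiff_id
    exact contDiff_id.sub h1
  have hg : ContDiff ℝ 2 g := hφ.smul hfc
  have hgdiff : Differentiable ℝ g := hg.differentiable (by norm_num)
  have hsupp : HasCompactSupport g := by
    apply HasCompactSupport.intro (isCompact_closedBall (0 : E3) (2 * R))
    intro a ha
    have : 2 * R ≤ ‖a‖ := by
      simp only [Metric.mem_closedBall, dist_zero_right, not_le] at ha
      exact ha.le
    simp [hg_def, hφ0 a this]
  have hDg_cont : Continuous (fderiv ℝ g) := hg.continuous_fderiv (by norm_num)
  have hDg_supp : HasCompactSupport (fderiv ℝ g) := hsupp.fderiv (𝕜 := ℝ)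
  obtain ⟨M, hM⟩ := hDg_supp.exists_bound_of_continuous hDg_cont
  have hDgC1 : ContDiff ℝ 1 (fderiv ℝ g) := hg.fderiv_right (by norm_num)
  obtain ⟨K, hK⟩ := hDgC1.lipschitzWith_of_hasCompactSupport hDg_supp (by norm_num)
  have hM0 : 0 ≤ M := le_trans (norm_nonneg _) (hM 0)
  set C : ℝ := max 1 (max M K) with hC_def
  have hC1 : (1 : ℝ) ≤ C := le_max_left _ _
  have hCM : M ≤ C := le_trans (le_max_left _ _) (le_max_right _ _)
  have hCK : (K : ℝ) ≤ C := le_trans (le_max_right _ _) (le_max_right _ _)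
  have hC0 : 0 < C := lt_of_lt_of_le one_pos hC1
  refine ⟨C, hC0, fun v w hv hw => ?_⟩
  have hcv : (fun y => φ (v y) • fcube (v y)) = g ∘ v := rfl
  have hcw : (fun y => φ (w y) • fcube (w y)) = g ∘ w := rfl
  -- the basic pointwise bound
  have hpt0 : ∀ x, ‖fderiv ℝ (g ∘ v) x - fderiv ℝ (g ∘ w) x‖
      ≤ M * ‖fderiv ℝ v x - fderiv ℝ w x‖ + K * ‖fderiv ℝ v x‖ * ‖v x - w x‖ := by
    intro x
    rw [fderiv_comp x (hgdiff (v x)) (hv x), fderiv_comp x (hgdiff (w x)) (hw x)]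
    have key : (fderiv ℝ g (v x)).comp (fderiv ℝ v x)
          - (fderiv ℝ g (w x)).comp (fderiv ℝ w x)
        = (fderiv ℝ g (w x)).comp (fderiv ℝ v x - fderiv ℝ w x)
          + (fderiv ℝ g (v x) - fderiv ℝ g (w x)).comp (fderiv ℝ v x) := by
      rw [ContinuousLinearMap.comp_sub, ContinuousLinearMap.sub_comp]
      abel
    rw [key]
    have h1 : ‖(fderiv ℝ g (w x)).comp (fderiv ℝ v x - fderiv ℝ w x)‖
        ≤ M * ‖fderiv ℝ v x - fderiv ℝ w x‖ :=
      le_trans (ContinuousLinearMap.opNorm_comp_le _ _)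
        (mul_le_mul_of_nonneg_right (hM _) (norm_nonneg _))
    have h2 : ‖(fderiv ℝ g (v x) - fderiv ℝ g (w x)).comp (fderiv ℝ v x)‖
        ≤ K * ‖v x - w x‖ * ‖fderiv ℝ v x‖ := by
      refine le_trans (ContinuousLinearMap.opNorm_comp_le _ _) ?_
      have hlip : ‖fderiv ℝ g (v x) - fderiv ℝ g (w x)‖ ≤ K * ‖v x - w x‖ := by
        have := hK.dist_le_mul (v x) (w x)
        rwa [dist_eq_norm, dist_eq_norm] at this
      exact mul_le_mul_of_nonneg_right hlip (norm_nonneg _)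
    calc ‖_ + _‖ ≤ _ + _ := norm_add_le _ _
      _ ≤ M * ‖fderiv ℝ v x - fderiv ℝ w x‖ + K * ‖fderiv ℝ v x‖ * ‖v x - w x‖ := by
          refine add_le_add h1 (h2.trans (le_of_eq ?_)); ring
  constructor
  · intro x
    rw [hcv, hcw]
    refine (hpt0 x).trans ?_
    have hcube : (0 : ℝ) ≤ ‖v x‖ ^ 3 := by positivity
    have ha : (0 : ℝ) ≤ ‖fderiv ℝ v x - fderiv ℝ w x‖ := norm_nonneg _
    have hb : (0 : ℝ) ≤ ‖fderiv ℝ v x‖ := norm_nonneg _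
    have hc : (0 : ℝ) ≤ ‖v x - w x‖ := norm_nonneg _
    have hK0 : (0 : ℝ) ≤ K := K.coe_nonneg
    nlinarith [mul_nonneg hb hc, mul_nonneg (mul_nonneg hb hc) hcube,
      mul_nonneg ha hcube]
  · intro p q hpq
    rw [hcv, hcw]
    set T : ℝ := (eLpNorm v ⊤ μ).toReal with hT_def
    have hT0 : 0 ≤ T := ENNReal.toReal_nonneg
    have hCA : C ≤ C * (1 + T ^ 3) := by nlinarith [mul_nonneg hC0.le (pow_nonneg hT0 3)]
    have hA0 : 0 ≤ C * (1 + T ^ 3) := le_trans hC0.le hCA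
    -- measurability
    have hmv : Measurable (fderiv ℝ v) := measurable_fderiv ℝ v
    have hmw : Measurable (fderiv ℝ w) := measurable_fderiv ℝ w
    have hvm : Measurable v := hv.continuous.measurable
    have hwm : Measurable w := hw.continuous.measurable
    have hm1 : AEStronglyMeasurable (fun x => C * ‖fderiv ℝ v x - fderiv ℝ w x‖) μ :=
      (((hmv.sub hmw).norm).const_mul C).aestronglyMeasurable
    have hm2 : AEStronglyMeasurable
        (fun x => C * (‖fderiv ℝ v x‖ * ‖v x - w x‖)) μ :=
      (((hmv.norm).mul ((hvm.sub hwm).norm)).const_mul C).aestronglyMeasurable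
    have hofC : ‖C‖ₑ = ENNReal.ofReal C := Real.enorm_eq_ofReal hC0.le
    have hCle : ENNReal.ofReal C ≤ ENNReal.ofReal (C * (1 + T ^ 3)) :=
      ENNReal.ofReal_le_ofReal hCA
    calc eLpNorm (fun x => fderiv ℝ (g ∘ v) x - fderiv ℝ (g ∘ w) x) 2 μ
        ≤ eLpNorm (fun x => C * ‖fderiv ℝ v x - fderiv ℝ w x‖
            + C * (‖fderiv ℝ v x‖ * ‖v x - w x‖)) 2 μ := by
          refine eLpNorm_mono fun x => ?_
          have h := hpt0 x
          have hb1 : M * ‖fderiv ℝ v x - fderiv ℝ w x‖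
              ≤ C * ‖fderiv ℝ v x - fderiv ℝ w x‖ :=
            mul_le_mul_of_nonneg_right hCM (norm_nonneg _)
          have hb2 : K * ‖fderiv ℝ v x‖ * ‖v x - w x‖
              ≤ C * (‖fderiv ℝ v x‖ * ‖v x - w x‖) := by
            rw [← mul_assoc]
            exact mul_le_mul_of_nonneg_right
              (mul_le_mul_of_nonneg_right hCK (norm_nonneg _)) (norm_nonneg _)
          have hrhs : (0:ℝ) ≤ C * ‖fderiv ℝ v x - fderiv ℝ w x‖
              + C * (‖fderiv ℝ v x‖ * ‖v x - w x‖) := by positivity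
          rw [Real.norm_of_nonneg hrhs]
          linarith
      _ ≤ eLpNorm (fun x => C * ‖fderiv ℝ v x - fderiv ℝ w x‖) 2 μ
            + eLpNorm (fun x => C * (‖fderiv ℝ v x‖ * ‖v x - w x‖)) 2 μ :=
          eLpNorm_add_le hm1 hm2 one_le_two
      _ ≤ ENNReal.ofReal (C * (1 + T ^ 3)) *
              eLpNorm (fun x => fderiv ℝ v x - fderiv ℝ w x) 2 μ
            + ENNReal.ofReal (C * (1 + T ^ 3)) *
                eLpNorm (fun x => fderiv ℝ v x) p μ * eLpNorm (fun x => v x - w x) q μ := by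
          refine add_le_add ?_ ?_
          · have heq : (fun x => C * ‖fderiv ℝ v x - fderiv ℝ w x‖)
                = C • (fun x => ‖fderiv ℝ v x - fderiv ℝ w x‖) := rfl
            rw [heq, eLpNorm_const_smul, eLpNorm_norm]
            calc ‖C‖ₑ * eLpNorm (fun x => fderiv ℝ v x - fderiv ℝ w x) 2 μ
                = ENNReal.ofReal C * eLpNorm (fun x => fderiv ℝ v x - fderiv ℝ w x) 2 μ := by
                  rw [hofC]
              _ ≤ _ := mul_le_mul_left hCle _
          · have heq : (fun x => C * (‖fderiv ℝ v x‖ * ‖v x - w x‖))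
                = C • (fun x => ‖fderiv ℝ v x‖ * ‖v x - w x‖) := rfl
            rw [heq, eLpNorm_const_smul]
            have hhold : eLpNorm (fun x => ‖fderiv ℝ v x‖ * ‖v x - w x‖) 2 μ
                ≤ eLpNorm (fun x => fderiv ℝ v x) p μ * eLpNorm (fun x => v x - w x) q μ := by
              have h := eLpNorm_smul_le_mul_eLpNorm (μ := μ) (p := p) (q := q) (r := 2)
                (f := fun x => ‖v x - w x‖) (((hvm.sub hwm).norm).aestronglyMeasurable)
                (φ := fun x => ‖fderiv ℝ v x‖) ((hmv.norm).aestronglyMeasurable)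
                (hpqr := ⟨by simpa only [one_div] using hpq⟩)
              have heq2 : (fun x => ‖fderiv ℝ v x‖) • (fun x => ‖v x - w x‖)
                  = fun x => ‖fderiv ℝ v x‖ * ‖v x - w x‖ := rfl
              rw [heq2] at h
              rwa [eLpNorm_norm, eLpNorm_norm] at h
            calc ‖C‖ₑ * eLpNorm (fun x => ‖fderiv ℝ v x‖ * ‖v x - w x‖) 2 μ
                ≤ ENNReal.ofReal (C * (1 + T ^ 3)) *
                  (eLpNorm (fun x => fderiv ℝ v x) p μ * eLpNorm (fun x => v x - w x) q μ) := by
                  rw [hofC]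
                  exact mul_le_mul' hCle hhold
              _ = _ := by rw [mul_assoc]
end
end

section
/- Logarithmic strong convergence rate from exponential-in-κ error bounds: suppose for every κ > 0, E[A_n] ≤ C̃ e^{C̃κ} ε and E[Ã_n] ≤ C_q κ^{-2^{q-1}} for every natural number q ≥ 1, where ε = h^2 + k^{1/2-δ} ∈ (0,1). Then choosing κ = (1/C̃)( |log ε| - (2^{q-1}-1) log|log ε| ), one obtains E[A_n + Ã_n] ≤ C_r |log ε|^{-r} for every r ≥ 1, with C_r independent of h and k. -/
noncomputable section

/-- Logarithmic strong convergence rate from exponential-in-κ error bounds: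
if for every `ε ∈ (0,1)` and `κ > 0`, `a(ε,κ) ≤ C̃ e^{C̃κ} ε` and, for every `q ≥ 1`,
`ã(ε,κ) ≤ C_q κ^{-2^{q-1}}`, then choosing
`κ = (1/C̃)(|log ε| - (2^{q-1}-1) log|log ε|)`, one obtains, for every `r ≥ 1` and small
`ε`, `a + ã ≤ C_r |log ε|^{-r}` with `C_r` independent of `ε` (hence of `h` and `k`). -/
theorem stmt15 (Ctil : ℝ) (hCtil : 0 < Ctil)
    (a atil : ℝ → ℝ → ℝ)
    (ha : ∀ ε κ, 0 ≤ a ε κ) (hat : ∀ ε κ, 0 ≤ atil ε κ)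
    (hA : ∀ ε ∈ Set.Ioo (0 : ℝ) 1, ∀ κ > (0 : ℝ), a ε κ ≤ Ctil * Real.exp (Ctil * κ) * ε)
    (Cq : ℕ → ℝ) (hCq : ∀ q, 0 < Cq q)
    (hAt : ∀ q : ℕ, 1 ≤ q → ∀ ε ∈ Set.Ioo (0 : ℝ) 1, ∀ κ > (0 : ℝ),
      atil ε κ ≤ Cq q * κ ^ (-((2 : ℝ) ^ (q - 1)))) :
    ∀ r : ℝ, 1 ≤ r → ∃ (q : ℕ) (Cr ε₀ : ℝ), 1 ≤ q ∧ 0 < Cr ∧ 0 < ε₀ ∧ ε₀ < 1 ∧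
      ∀ ε : ℝ, 0 < ε → ε < ε₀ →
        a ε ((1 / Ctil) * (|Real.log ε| - ((2 : ℝ) ^ (q - 1) - 1) * Real.log |Real.log ε|))
          + atil ε
              ((1 / Ctil) * (|Real.log ε| - ((2 : ℝ) ^ (q - 1) - 1) * Real.log |Real.log ε|))
          ≤ Cr * |Real.log ε| ^ (-r) := by
  intro r hr
  obtain ⟨n, hn⟩ := pow_unbounded_of_one_lt (r + 1) (by norm_num : (1:ℝ) < 2)
  -- hn : r + 1 < 2 ^ n
  set c : ℝ := 2 ^ n with hc
  set m : ℝ := c - 1 with hm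
  set L0 : ℝ := max 1 (16 * m ^ 2) with hL0
  have hL01 : (1:ℝ) ≤ L0 := le_max_left _ _
  have hL0m : 16 * m ^ 2 ≤ L0 := le_max_right _ _
  clear_value L0
  clear_value m
  have hq1 : (2:ℝ) ^ (n + 1 - 1) = c := by norm_num [hc]
  clear_value c
  have hc1 : (1:ℝ) ≤ c := by linarith
  have hmr : r ≤ m := by rw [hm]; linarith
  have hm1 : (1:ℝ) ≤ m := le_trans hr hmr
  have hrc : r ≤ c := by linarith
  have h2C : (0:ℝ) < 2 * Ctil := by linarith
  refine ⟨n + 1, Ctil + Cq (n+1) * (2 * Ctil) ^ c, Real.exp (-L0), le_add_self, ?_, Real.exp_pos _,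
    ?_, ?_⟩
  · have h1 : (0:ℝ) < (2 * Ctil) ^ c := Real.rpow_pos_of_pos h2C c
    have h2 := hCq (n+1)
    positivity
  · exact Real.exp_lt_one_iff.mpr (by linarith)
  intro ε hε hεlt
  have hε1 : ε < 1 := lt_trans hεlt (Real.exp_lt_one_iff.mpr (by linarith))
  have hlogneg : Real.log ε < 0 := Real.log_neg hε hε1
  set L : ℝ := |Real.log ε| with hLdef
  have hLeq : L = -Real.log ε := abs_of_neg hlogneg
  have hLgt : L0 < L := by
    have := Real.log_lt_log hε hεlt
    rw [Real.log_exp] at this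
    rw [hLeq]; linarith
  clear_value L
  have hL1 : (1:ℝ) ≤ L := le_trans hL01 hLgt.le
  have hLm : 16 * m ^ 2 ≤ L := le_trans hL0m hLgt.le
  have hLpos : (0:ℝ) < L := by linarith
  have hsq : Real.sqrt L * Real.sqrt L = L := Real.mul_self_sqrt hLpos.le
  have hsqpos : 0 < Real.sqrt L := Real.sqrt_pos.mpr hLpos
  have h4m : 4 * m ≤ Real.sqrt L := by
    have h1 : Real.sqrt (16 * m ^ 2) ≤ Real.sqrt L := Real.sqrt_le_sqrt hLm
    have heq : Real.sqrt (16 * m ^ 2) = 4 * m := by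
      rw [show 16 * m ^ 2 = (4 * m) ^ 2 by ring, Real.sqrt_sq (by linarith)]
    linarith [heq ▸ h1]
  have hlogL : m * Real.log L ≤ L / 2 := by
    have h1 : Real.log L = 2 * Real.log (Real.sqrt L) := by
      rw [Real.log_sqrt hLpos.le]; ring
    have h2 : Real.log (Real.sqrt L) ≤ Real.sqrt L - 1 :=
      Real.log_le_sub_one_of_pos hsqpos
    have h3 : Real.log L ≤ 2 * Real.sqrt L := by rw [h1]; linarith
    have h4 : m * Real.log L ≤ m * (2 * Real.sqrt L) :=
      mul_le_mul_of_nonneg_left h3 (by linarith)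
    nlinarith
  have hlogLpos : 0 ≤ Real.log L := Real.log_nonneg hL1
  set κ : ℝ := (1 / Ctil) * (L - m * Real.log L) with hκ
  clear_value κ
  have hκsub : L / 2 ≤ L - m * Real.log L := by linarith
  have hκpos : 0 < κ := by
    rw [hκ]; apply mul_pos (by positivity); linarith
  have hεmem : ε ∈ Set.Ioo (0:ℝ) 1 := ⟨hε, hε1⟩
  have hCκ : Ctil * κ = L - m * Real.log L := by
    rw [hκ]; field_simp
  -- bound on a
  have haB : a ε κ ≤ Ctil * L ^ (-r) := by
    have hmain := hA ε hεmem κ hκpos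
    rw [hCκ] at hmain
    have hexpL : Real.exp L = ε⁻¹ := by rw [hLeq, Real.exp_neg, Real.exp_log hε]
    have hexp : Real.exp (L - m * Real.log L) * ε = L ^ (-m) := by
      rw [Real.exp_sub, Real.rpow_def_of_pos hLpos, hexpL,
        show Real.log L * (-m) = -(m * Real.log L) by ring, Real.exp_neg]
      field_simp
    calc a ε κ ≤ Ctil * Real.exp (L - m * Real.log L) * ε := hmain
      _ = Ctil * (Real.exp (L - m * Real.log L) * ε) := by ring
      _ = Ctil * L ^ (-m) := by rw [hexp]
      _ ≤ Ctil * L ^ (-r) := by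
          apply mul_le_mul_of_nonneg_left _ hCtil.le
          exact Real.rpow_le_rpow_of_exponent_le hL1 (by linarith)
  -- bound on atil
  have hatB : atil ε κ ≤ Cq (n+1) * (2 * Ctil) ^ c * L ^ (-r) := by
    have hbase : L / (2 * Ctil) ≤ κ := by
      have heq : L / (2 * Ctil) = (1 / Ctil) * (L / 2) := by ring
      rw [hκ, heq]
      exact mul_le_mul_of_nonneg_left hκsub (by positivity)
    have hbpos : 0 < L / (2 * Ctil) := by positivity
    have h1 := hAt (n+1) (by norm_num) ε hεmem κ hκpos
    rw [hq1] at h1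
    have h2 : κ ^ (-c) ≤ (L / (2 * Ctil)) ^ (-c) :=
      Real.rpow_le_rpow_of_nonpos hbpos hbase (neg_nonpos.mpr (by linarith))
    have h3 : (L / (2 * Ctil)) ^ (-c) = (2 * Ctil) ^ c * L ^ (-c) := by
      rw [Real.div_rpow hLpos.le h2C.le, Real.rpow_neg h2C.le, div_eq_mul_inv, inv_inv]
      ring
    have h4 : L ^ (-c) ≤ L ^ (-r) :=
      Real.rpow_le_rpow_of_exponent_le hL1 (by linarith)
    calc atil ε κ ≤ Cq (n+1) * κ ^ (-c) := h1
      _ ≤ Cq (n+1) * ((2 * Ctil) ^ c * L ^ (-c)) := by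
          rw [← h3]; exact mul_le_mul_of_nonneg_left h2 (hCq _).le
      _ ≤ Cq (n+1) * ((2 * Ctil) ^ c * L ^ (-r)) := by
          apply mul_le_mul_of_nonneg_left _ (hCq _).le
          exact mul_le_mul_of_nonneg_left h4 (Real.rpow_pos_of_pos h2C c).le
      _ = Cq (n+1) * (2 * Ctil) ^ c * L ^ (-r) := by ring
  have hfin : (1 / Ctil) * (L - ((2:ℝ) ^ (n + 1 - 1) - 1) * Real.log L) = κ := by
    rw [hq1, hκ, hm]
  rw [hfin]
  calc a ε κ + atil ε κ ≤ Ctil * L ^ (-r) + Cq (n+1) * (2 * Ctil) ^ c * L ^ (-r) :=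
        add_le_add haB hatB
    _ = (Ctil + Cq (n+1) * (2 * Ctil) ^ c) * L ^ (-r) := by ring
end
end
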